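/- arXiv:1309.2349 — 2 statements merged into one kernel-verified Lean document; each statement's English description precedes it below -/
import Mathlib

section
/- Let ε>0, M≥1 an integer, ε<Δx, and 0<δx≤ε/(2M+1). For m∈{-M,…,M} let L_m∈ℤ, α_m∈[0,1/Δx) satisfy m/ε=L_m/Δx+α_m and set w_m=e^{2πi L_m δx/Δx}. Then for every l with −M≤l≤M−1 one has |w_{l+1}−w_l| > |e^{2πi(1/ε−1/Δx)δx}−1|, and also |w_M−w_{-M}| > |e^{2πi(1/ε−1/Δx)δx}−1|; moreover |e^{2πi(1/ε−1/Δx)δx}−1| = 2·sin(π(1/ε−1/Δx)δx) > 0. -/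
/-!
Since `|e^{2πis} - e^{2πit}| = 2|sin(π(s - t))|` and `sin(πx) > sin(πa)` for `a < x < 1 - a`,
it suffices to place the phase difference of two nodes strictly between
`a := (1/ε - 1/Δx)δx` and `1 - a`. For nodes `m < n` the decomposition gives
`(L_n - L_m)δx/Δx = (n - m)δx/ε - (α_n - α_m)δx` with `|α_n - α_m| < 1/Δx`, which lies in that
interval as soon as `(n - m + 1)δx ≤ ε`; both `n - m = 1` and `n - m = 2M` qualify.
-/

open Complex

lemma norm_exp_two_pi_I_mul_sub_one (s : ℝ) :
    ‖exp (2 * Real.pi * I * s) - 1‖ = 2 * |Real.sin (Real.pi * s)| := by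
  have h := norm_exp_I_mul_ofReal_sub_one (2 * Real.pi * s)
  rw [show I * ((2 * Real.pi * s : ℝ) : ℂ) = 2 * Real.pi * I * s by push_cast; ring] at h
  rw [h, norm_mul, Real.norm_eq_abs, Real.norm_eq_abs, abs_two]
  ring_nf

lemma norm_exp_two_pi_I_mul_sub_exp (s t : ℝ) :
    ‖exp (2 * Real.pi * I * s) - exp (2 * Real.pi * I * t)‖ =
      2 * |Real.sin (Real.pi * (s - t))| := by
  have hfactor : exp (2 * Real.pi * I * s) - exp (2 * Real.pi * I * t) =
      exp (((2 * Real.pi * t : ℝ) : ℂ) * I) * (exp (2 * Real.pi * I * (s - t : ℝ)) - 1) := by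
    rw [mul_sub, ← exp_add, mul_one]
    push_cast
    ring_nf
  rw [hfactor, norm_mul, norm_exp_ofReal_mul_I, one_mul, norm_exp_two_pi_I_mul_sub_one]

lemma Real.sin_pi_mul_lt_sin_pi_mul {a x : ℝ} (ha : 0 < a) (hax : a < x) (hx : x < 1 - a) :
    Real.sin (Real.pi * a) < Real.sin (Real.pi * x) := by
  have hpi := Real.pi_pos
  rw [← sub_pos, Real.sin_sub_sin]
  have hsin : 0 < Real.sin ((Real.pi * x - Real.pi * a) / 2) :=
    Real.sin_pos_of_pos_of_lt_pi (by nlinarith) (by nlinarith)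
  have hcos : 0 < Real.cos ((Real.pi * x + Real.pi * a) / 2) :=
    Real.cos_pos_of_mem_Ioo ⟨by nlinarith, by nlinarith⟩
  positivity

lemma norm_exp_two_pi_I_mul_sub_one_lt {a s t : ℝ} (ha : 0 < a) (hlo : a < s - t)
    (hhi : s - t < 1 - a) :
    ‖exp (2 * Real.pi * I * a) - 1‖ < ‖exp (2 * Real.pi * I * s) - exp (2 * Real.pi * I * t)‖ := by
  rw [norm_exp_two_pi_I_mul_sub_one, norm_exp_two_pi_I_mul_sub_exp]
  have hsin_pos : 0 < Real.sin (Real.pi * a) :=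
    Real.sin_pos_of_pos_of_lt_pi (by positivity) (by nlinarith [Real.pi_pos])
  rw [abs_of_pos hsin_pos]
  linarith [Real.sin_pi_mul_lt_sin_pi_mul ha hlo hhi, le_abs_self (Real.sin (Real.pi * (s - t)))]

lemma phase_diff_mem_Ioo {ε Δ δ m n p q α β : ℝ} (hε : 0 < ε) (hδ : 0 < δ)
    (hmn : 1 ≤ n - m) (hnm : (n - m + 1) * δ ≤ ε)
    (hp : m / ε = p / Δ + α) (hα : 0 ≤ α) (hαΔ : α < 1 / Δ)
    (hq : n / ε = q / Δ + β) (hβ : 0 ≤ β) (hβΔ : β < 1 / Δ) :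
    q * δ / Δ - p * δ / Δ ∈ Set.Ioo ((1 / ε - 1 / Δ) * δ) (1 - (1 / ε - 1 / Δ) * δ) := by
  have hqp : q * δ / Δ - p * δ / Δ = (n - m) * δ / ε - β * δ + α * δ := by
    linear_combination δ * (hp - hq)
  have hlo : δ / ε ≤ (n - m) * δ / ε :=
    div_le_div_of_nonneg_right (by nlinarith) hε.le
  have hhi : (n - m) * δ / ε + δ / ε ≤ 1 := by
    rw [← add_div, div_le_one hε]
    linarith
  have hαδ : α * δ < δ / Δ := by simpa [div_eq_inv_mul] using mul_lt_mul_of_pos_right hαΔ hδ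
  have hβδ : β * δ < δ / Δ := by simpa [div_eq_inv_mul] using mul_lt_mul_of_pos_right hβΔ hδ
  rw [hqp, sub_mul, one_div_mul_eq_div, one_div_mul_eq_div]
  constructor <;> linarith [mul_nonneg hα hδ.le, mul_nonneg hβ hδ.le]

/-- **Separation of the Vandermonde nodes.**  With `m/ε = L_m/Δx + α_m`
(`L_m ∈ ℤ`, `α_m ∈ [0,1/Δx)`), `w_m = e^{2πi L_m δx/Δx}`: adjacent nodes satisfy
`|w_{l+1} - w_l| > |e^{2πi(1/ε-1/Δx)δx} - 1|` for `-M ≤ l ≤ M-1`, as well as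
`|w_M - w_{-M}| > |e^{2πi(1/ε-1/Δx)δx} - 1|`; moreover
`|e^{2πi(1/ε-1/Δx)δx} - 1| = 2 sin(π(1/ε-1/Δx)δx) > 0`. -/
theorem vandermonde_nodes_separation
    (ε Δx δx : ℝ) (M : ℕ)
    (hM : 1 ≤ M) (hε : 0 < ε) (hΔx : ε < Δx)
    (hδx : 0 < δx) (hδx2 : δx ≤ ε / (2 * M + 1))
    (L : ℤ → ℤ) (α : ℤ → ℝ)
    (hdecomp : ∀ m : ℤ, |m| ≤ (M : ℤ) →
      (m : ℝ) / ε = (L m : ℝ) / Δx + α m ∧ 0 ≤ α m ∧ α m < 1 / Δx) :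
    (∀ l : ℤ, -(M : ℤ) ≤ l → l ≤ (M : ℤ) - 1 →
      ‖Complex.exp (2 * Real.pi * Complex.I * ((L (l + 1) : ℝ) * δx / Δx)) -
          Complex.exp (2 * Real.pi * Complex.I * ((L l : ℝ) * δx / Δx))‖ >
        ‖Complex.exp (2 * Real.pi * Complex.I * ((1 / ε - 1 / Δx) * δx)) - 1‖) ∧
    (‖Complex.exp (2 * Real.pi * Complex.I * ((L (M : ℤ) : ℝ) * δx / Δx)) -
          Complex.exp (2 * Real.pi * Complex.I * ((L (-(M : ℤ)) : ℝ) * δx / Δx))‖ >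
        ‖Complex.exp (2 * Real.pi * Complex.I * ((1 / ε - 1 / Δx) * δx)) - 1‖) ∧
    (‖Complex.exp (2 * Real.pi * Complex.I * ((1 / ε - 1 / Δx) * δx)) - 1‖ =
        2 * Real.sin (Real.pi * (1 / ε - 1 / Δx) * δx)) ∧
    (0 < 2 * Real.sin (Real.pi * (1 / ε - 1 / Δx) * δx)) := by
  have hgap : 0 < (1 / ε - 1 / Δx) * δx :=
    mul_pos (sub_pos.2 (one_div_lt_one_div_of_lt hε hΔx)) hδx
  have hMδ : (2 * M + 1) * δx ≤ ε := (le_div_iff₀' (by positivity)).1 hδx2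
  have hgap_lt : (1 / ε - 1 / Δx) * δx < 1 :=
    calc (1 / ε - 1 / Δx) * δx < 1 / ε * δx :=
          mul_lt_mul_of_pos_right (by linarith [one_div_pos.2 (hε.trans hΔx)]) hδx
      _ ≤ 1 := by rw [one_div_mul_eq_div, div_le_one hε]; nlinarith [hMδ]
  have separated : ∀ m n : ℤ, |m| ≤ M → |n| ≤ M → 1 ≤ n - m → n - m + 1 ≤ 2 * M + 1 →
      ‖Complex.exp (2 * Real.pi * Complex.I * ((L n : ℝ) * δx / Δx)) -
          Complex.exp (2 * Real.pi * Complex.I * ((L m : ℝ) * δx / Δx))‖ >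
        ‖Complex.exp (2 * Real.pi * Complex.I * ((1 / ε - 1 / Δx) * δx)) - 1‖ := by
    intro m n hm hn hmn hnm
    obtain ⟨hp, hα, hαΔ⟩ := hdecomp m hm
    obtain ⟨hq, hβ, hβΔ⟩ := hdecomp n hn
    have hnm' : (n : ℝ) - m + 1 ≤ 2 * M + 1 := by exact_mod_cast hnm
    obtain ⟨hlo, hhi⟩ := phase_diff_mem_Ioo hε hδx (by exact_mod_cast hmn) (by nlinarith)
      hp hα hαΔ hq hβ hβΔ
    exact_mod_cast norm_exp_two_pi_I_mul_sub_one_lt hgap hlo hhi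
  have hsin_pos : 0 < Real.sin (Real.pi * (1 / ε - 1 / Δx) * δx) := by
    rw [mul_assoc]
    exact Real.sin_pos_of_pos_of_lt_pi (by positivity) (by nlinarith [Real.pi_pos])
  have hnorm : ‖Complex.exp (2 * Real.pi * Complex.I * ((1 / ε - 1 / Δx) * δx)) - 1‖ =
      2 * Real.sin (Real.pi * (1 / ε - 1 / Δx) * δx) := by
    rw [← abs_of_pos hsin_pos, mul_assoc Real.pi]
    exact_mod_cast norm_exp_two_pi_I_mul_sub_one ((1 / ε - 1 / Δx) * δx)
  refine ⟨fun l hl hl' => separated l (l + 1) ?_ ?_ ?_ ?_, separated _ _ ?_ ?_ ?_ ?_, hnorm,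
    by positivity⟩ <;> first | omega | (rw [abs_le]; omega)
end

section
/- Let N,M be nonnegative integers with M≥1, let L_1,L_2 be positive integers with L_2 | L_1, set ε=1/L_1 and Δx=1/L_2, and let δx>0 satisfy δx<ε/M and Δx<1/N (N≥1). Let f^ε(x)=Σ_{n=0}^{N}Σ_{m=0}^{M} f_{n,m} e^{2πi(n+m/ε)x} with complex coefficients f_{n,m}. Let J>N and K>M be integers and consider the sampling points x_{j,k}=jΔx+kδx for 1≤j≤J, 1≤k≤K. Then the coefficients (f_{n,m})_{0≤n≤N,0≤m≤M} are uniquely determined by the samples f^ε(x_{j,k}): if two such trigonometric polynomials agree at all points x_{j,k}, then all their coefficients coincide. -/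
open Complex

noncomputable def ee (x : ℝ) : ℂ := Complex.exp (2 * Real.pi * Complex.I * x)

lemma ee_add (x y : ℝ) : ee (x + y) = ee x * ee y := by
  simp [ee, ← Complex.exp_add]; ring_nf

lemma ee_nat (n : ℕ) : ee n = 1 := by
  have := Complex.exp_int_mul_two_pi_mul_I (n : ℤ)
  simpa [ee, mul_comm, mul_assoc, mul_left_comm] using this

lemma ee_pow (x : ℝ) (n : ℕ) : ee ((n : ℝ) * x) = ee x ^ n := by
  rw [ee, ee, ← Complex.exp_nat_mul]
  push_cast
  ring_nf

lemma ee_ne (x : ℝ) : ee x ≠ 0 := Complex.exp_ne_zero _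

lemma ee_inj {P : ℕ} {c : ℝ} (hc : 0 < c) (hcP : (P : ℝ) * c < 1) :
    Function.Injective (fun i : Fin (P + 1) => ee (((i : ℕ) + 1) * c)) := by
  intro i i' h
  simp only [ee] at h
  obtain ⟨z, hz⟩ := Complex.exp_eq_exp_iff_exists_int.mp h
  have h2 : (2 * Real.pi * Complex.I) ≠ 0 := by
    simp [Real.pi_ne_zero, Complex.I_ne_zero]
  have hz' : ((((i : ℕ) + 1 : ℝ) * c : ℝ) : ℂ) = ((((i' : ℕ) + 1 : ℝ) * c : ℝ) : ℂ) + (z : ℂ) := by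
    have : (2 * Real.pi * Complex.I) * ((((i : ℕ) + 1 : ℝ) * c : ℝ) : ℂ)
        = (2 * Real.pi * Complex.I) * (((((i' : ℕ) + 1 : ℝ) * c : ℝ) : ℂ) + (z : ℂ)) := by
      push_cast at hz ⊢
      push_cast
      linear_combination hz
    exact mul_left_cancel₀ h2 this
  have hre : ((i : ℕ) + 1 : ℝ) * c = ((i' : ℕ) + 1 : ℝ) * c + (z : ℝ) := by
    have := congrArg Complex.re hz'
    simpa using this
  have hzz : (z : ℝ) = ((i : ℕ) - (i' : ℕ) : ℝ) * c := by linarith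
  have h1 : |((i : ℕ) - (i' : ℕ) : ℝ)| ≤ (P : ℝ) := by
    have hi : ((i : ℕ) : ℝ) ≤ P := by exact_mod_cast i.is_le
    have hi' : ((i' : ℕ) : ℝ) ≤ P := by exact_mod_cast i'.is_le
    have hi0 : (0 : ℝ) ≤ ((i : ℕ) : ℝ) := Nat.cast_nonneg _
    have hi0' : (0 : ℝ) ≤ ((i' : ℕ) : ℝ) := Nat.cast_nonneg _
    rw [abs_sub_le_iff]
    constructor <;> linarith
  have hb : |(z : ℝ)| < 1 := by
    rw [hzz, abs_mul, abs_of_pos hc]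
    have h2 : |((i : ℕ) - (i' : ℕ) : ℝ)| * c ≤ (P : ℝ) * c :=
      mul_le_mul_of_nonneg_right h1 hc.le
    linarith
  have hz0 : z = 0 := by
    by_contra h0
    have : (1 : ℝ) ≤ |(z : ℝ)| := by
      rw [← Int.cast_abs]
      exact_mod_cast Int.one_le_abs h0
    linarith
  rw [hz0] at hre
  push_cast at hre
  have hval : ((i : ℕ) : ℝ) = ((i' : ℕ) : ℝ) := by
    have hcne := hc.ne'
    nlinarith [hre]
  exact Fin.ext (by exact_mod_cast hval)

/-- **Unique recovery of a doubly periodic bandlimited multiscale function from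
clustered samples (Example 5.1).**  With `ε = 1/L₁`, `Δx = 1/L₂`, `L₂ ∣ L₁`,
`δx < ε/M`, `Δx < 1/N`, and sampling points `x_{j,k} = jΔx + kδx`, `1 ≤ j ≤ J`,
`1 ≤ k ≤ K` where `J > N` and `K > M`: if two trigonometric polynomials
`∑_{n=0}^{N}∑_{m=0}^{M} f_{n,m} e^{2πi(n + m/ε)x}` agree at all sampling points,
then all their coefficients coincide. -/
theorem doubly_periodic_unique_recovery
    (N M L₁ L₂ J K : ℕ) (ε Δx δx : ℝ)
    (hN : 1 ≤ N) (hM : 1 ≤ M)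
    (hL₁ : 0 < L₁) (hL₂ : 0 < L₂) (hdvd : L₂ ∣ L₁)
    (hε : ε = 1 / (L₁ : ℝ)) (hΔx : Δx = 1 / (L₂ : ℝ))
    (hδx : 0 < δx) (hδx2 : δx < ε / (M : ℝ)) (hΔxN : Δx < 1 / (N : ℝ))
    (hJ : N < J) (hK : M < K)
    (F G : Fin (N + 1) → Fin (M + 1) → ℂ)
    (hsamp : ∀ j k : ℕ, 1 ≤ j → j ≤ J → 1 ≤ k → k ≤ K →
      (∑ n : Fin (N + 1), ∑ m : Fin (M + 1),
        F n m * Complex.exp (2 * Real.pi * Complex.I *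
          (((n : ℕ) + (m : ℕ) / ε) * ((j : ℝ) * Δx + (k : ℝ) * δx)))) =
      ∑ n : Fin (N + 1), ∑ m : Fin (M + 1),
        G n m * Complex.exp (2 * Real.pi * Complex.I *
          (((n : ℕ) + (m : ℕ) / ε) * ((j : ℝ) * Δx + (k : ℝ) * δx)))) :
    F = G := by
  obtain ⟨t, ht⟩ := hdvd
  have hL1R : (0 : ℝ) < (L₁ : ℝ) := by exact_mod_cast hL₁
  have hL2R : (0 : ℝ) < (L₂ : ℝ) := by exact_mod_cast hL₂
  have hNR : (0 : ℝ) < (N : ℝ) := by exact_mod_cast hN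
  have hMR : (0 : ℝ) < (M : ℝ) := by exact_mod_cast hM
  have hL2ne : ((L₂ : ℝ)) ≠ 0 := hL2R.ne'
  have hNL2 : (N : ℝ) < (L₂ : ℝ) := by
    rw [hΔx] at hΔxN
    rw [div_lt_div_iff₀ hL2R hNR] at hΔxN
    linarith
  -- samples for the difference, in terms of `ee`
  have hs : ∀ j k : ℕ, 1 ≤ j → j ≤ J → 1 ≤ k → k ≤ K →
      ∑ n : Fin (N + 1), ∑ m : Fin (M + 1),
        (F n m - G n m) * ee ((((n : ℕ) : ℝ) + ((m : ℕ) : ℝ) * (L₁ : ℝ)) *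
          ((j : ℝ) * Δx + (k : ℝ) * δx)) = 0 := by
    intro j k hj1 hjJ hk1 hkK
    have h := hsamp j k hj1 hjJ hk1 hkK
    have hterm : ∀ (n : Fin (N + 1)) (m : Fin (M + 1)),
        Complex.exp (2 * Real.pi * Complex.I *
          (((n : ℕ) + (m : ℕ) / ε) * ((j : ℝ) * Δx + (k : ℝ) * δx)))
        = ee ((((n : ℕ) : ℝ) + ((m : ℕ) : ℝ) * (L₁ : ℝ)) *
            ((j : ℝ) * Δx + (k : ℝ) * δx)) := by
      intro n m
      rw [ee]
      congr 1
      rw [hε]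
      have hc : ((L₁ : ℂ)) ≠ 0 := by exact_mod_cast hL1R.ne'
      push_cast
      field_simp
    simp only [hterm] at h
    simp only [sub_mul, Finset.sum_sub_distrib]
    rw [sub_eq_zero]
    exact h
  set H : Fin (N + 1) → Fin (M + 1) → ℂ := fun n m => F n m - G n m with hH
  -- Step 1: eliminate the j-direction
  have claim1 : ∀ k : ℕ, 1 ≤ k → k ≤ K → ∀ n : Fin (N + 1),
      ∑ m : Fin (M + 1), H n m *
        ee ((((n : ℕ) : ℝ) + ((m : ℕ) : ℝ) * (L₁ : ℝ)) * ((k : ℝ) * δx)) = 0 := by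
    intro k hk1 hkK
    have hinj : Function.Injective
        (fun i : Fin (N + 1) => ee ((((i : ℕ) : ℝ) + 1) * Δx)) := by
      refine ee_inj (by rw [hΔx]; positivity) ?_
      rw [hΔx, mul_one_div]
      exact (div_lt_one hL2R).mpr hNL2
    have hv := Matrix.eq_zero_of_forall_index_sum_mul_pow_eq_zero
      (f := fun i : Fin (N + 1) => ee ((((i : ℕ) : ℝ) + 1) * Δx))
      (v := fun n : Fin (N + 1) => ∑ m : Fin (M + 1), H n m *
        ee ((((n : ℕ) : ℝ) + ((m : ℕ) : ℝ) * (L₁ : ℝ)) * ((k : ℝ) * δx)))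
      hinj ?_
    · intro n
      exact congrFun hv n
    · intro i
      have hjJ : (i : ℕ) + 1 ≤ J := by have := i.is_le; omega
      have hsJK := hs ((i : ℕ) + 1) k (by omega) hjJ hk1 hkK
      simp only [Finset.sum_mul]
      rw [← hsJK]
      refine Finset.sum_congr rfl fun n _ => Finset.sum_congr rfl fun m _ => ?_
      rw [mul_assoc]
      congr 1
      rw [← ee_pow, ← ee_add]
      rw [show (((n : ℕ) : ℝ) + ((m : ℕ) : ℝ) * (L₁ : ℝ)) *
            ((((i : ℕ) + 1 : ℕ) : ℝ) * Δx + (k : ℝ) * δx)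
          = ((((n : ℕ) : ℝ) + ((m : ℕ) : ℝ) * (L₁ : ℝ)) * ((k : ℝ) * δx)
            + ((n : ℕ) : ℝ) * ((((i : ℕ) : ℝ) + 1) * Δx))
            + (((m : ℕ) * t * ((i : ℕ) + 1) : ℕ) : ℝ) by
        rw [hΔx, ht]
        push_cast
        field_simp
        ring]
      conv_rhs => rw [ee_add]
      rw [ee_nat, mul_one]
  -- Step 2: eliminate the k-direction
  have claim2 : ∀ n : Fin (N + 1), ∀ m : Fin (M + 1), H n m = 0 := by
    intro n
    have hinj : Function.Injective
        (fun i : Fin (M + 1) => ee ((((i : ℕ) : ℝ) + 1) * ((L₁ : ℝ) * δx))) := by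
      refine ee_inj (by positivity) ?_
      rw [hε, div_div] at hδx2
      have h1 : δx * ((L₁ : ℝ) * (M : ℝ)) < 1 :=
        (lt_div_iff₀ (by positivity)).mp hδx2
      have h2 : (M : ℝ) * ((L₁ : ℝ) * δx) = δx * ((L₁ : ℝ) * (M : ℝ)) := by ring
      rw [h2]; exact h1
    have hv := Matrix.eq_zero_of_forall_index_sum_mul_pow_eq_zero
      (f := fun i : Fin (M + 1) => ee ((((i : ℕ) : ℝ) + 1) * ((L₁ : ℝ) * δx)))
      (v := fun m : Fin (M + 1) => H n m)
      hinj ?_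
    · intro m
      exact congrFun hv m
    · intro i
      have hkK : (i : ℕ) + 1 ≤ K := by have := i.is_le; omega
      have hc1 := claim1 ((i : ℕ) + 1) (by omega) hkK n
      have h3 : (∑ m : Fin (M + 1), H n m *
          ee ((((i : ℕ) : ℝ) + 1) * ((L₁ : ℝ) * δx)) ^ (m : ℕ)) *
          ee (((n : ℕ) : ℝ) * ((((i : ℕ) : ℝ) + 1) * δx)) = 0 := by
        rw [Finset.sum_mul, ← hc1]
        refine Finset.sum_congr rfl fun m _ => ?_
        rw [mul_assoc]
        congr 1
        rw [← ee_pow, ← ee_add]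
        congr 1
        push_cast
        ring
      exact (mul_eq_zero.mp h3).resolve_right (ee_ne _)
  funext n m
  have := claim2 n m
  rw [hH] at this
  exact sub_eq_zero.mp this
end
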